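/- arXiv:2004.08497 — 4 statements merged into one kernel-verified Lean document; each statement's English description precedes it below -/
import Mathlib

section
/- Let k: ℝ² → ℝ^{n-1} be a solution of the vmKdV equation k_t = -(k_{xxx} + (3/2)‖k‖²k_x) and let g = (e₁,...,eₙ): ℝ² → SO(n) satisfy the corresponding Lax pair (g⁻¹g_x = [[0,-kᵗ],[k,0]], g⁻¹g_t = [[0,-zᵗ],[z,ξ]] with z, ξ as in the vmKdV frame equations). Define Z = -((‖k‖²/2) e₁ + Σ_{i=1}^{n-1} (kᵢ)_x e_{i+1}), c(t) = ∫₀ᵗ Z(0,s) ds, and γ(x,t) = c(t) + ∫₀ˣ e₁(s,t) ds. Then γ satisfies the geometric Airy curve flow γ_t = -((‖k‖²/2) e₁ + Σᵢ (kᵢ)_x e_{i+1}), i.e. γ_t = Z. -/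
open scoped BigOperators
open Matrix

noncomputable def pdx (f : ℝ → ℝ → ℝ) : ℝ → ℝ → ℝ := fun x t => deriv (fun x' => f x' t) x
noncomputable def pdt (f : ℝ → ℝ → ℝ) : ℝ → ℝ → ℝ := fun x t => deriv (fun t' => f x t') t

/-- the block matrix `[[0, -kᵗ],[k, 0]]` (blocks of sizes `1 + m`) -/
noncomputable def blkP {m : ℕ} (k : Fin m → ℝ) : Matrix (Fin (m + 1)) (Fin (m + 1)) ℝ :=
  ∑ j : Fin m, k j • (Matrix.single j.succ 0 1 - Matrix.single 0 j.succ 1)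

/-- the block matrix `[[0, -zᵗ],[z, ξ]]` (blocks of sizes `1 + m`) -/
noncomputable def blkQ {m : ℕ} (z : Fin m → ℝ) (ξ : Fin m → Fin m → ℝ) :
    Matrix (Fin (m + 1)) (Fin (m + 1)) ℝ :=
  blkP z + ∑ j : Fin m, ∑ j' : Fin m, ξ j j' • Matrix.single j.succ j'.succ 1

noncomputable def mdx {N : ℕ} (f : ℝ → ℝ → Matrix (Fin N) (Fin N) ℝ) (x t : ℝ) :
    Matrix (Fin N) (Fin N) ℝ :=
  Matrix.of fun i j => deriv (fun x' => f x' t i j) x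

noncomputable def mdt {N : ℕ} (f : ℝ → ℝ → Matrix (Fin N) (Fin N) ℝ) (x t : ℝ) :
    Matrix (Fin N) (Fin N) ℝ :=
  Matrix.of fun i j => deriv (fun t' => f x t' i j) t

/-- the `j`-th column of a frame `g`, as a vector in ℝⁿ -/
noncomputable def colv {N : ℕ} (g : ℝ → ℝ → Matrix (Fin N) (Fin N) ℝ) (j : Fin N)
    (x t : ℝ) : EuclideanSpace ℝ (Fin N) := WithLp.toLp 2 (fun i => g x t i j)

/-! ### auxiliary lemmas -/

section Aux

lemma aux_hasDerivAt_fst {f : ℝ → ℝ → ℝ} (hf : ContDiff ℝ (⊤ : ℕ∞) fun p : ℝ × ℝ => f p.1 p.2)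
    (x t : ℝ) :
    HasDerivAt (fun x' => f x' t) (fderiv ℝ (fun p : ℝ × ℝ => f p.1 p.2) (x, t) (1, 0)) x := by
  have h1 : HasDerivAt (fun x' : ℝ => (x', t)) ((1 : ℝ), (0 : ℝ)) x :=
    (hasDerivAt_id x).prodMk (hasDerivAt_const x t)
  exact ((hf.differentiable (by simp)).differentiableAt.hasFDerivAt.comp_hasDerivAt x h1)

lemma aux_pdx_eq {f : ℝ → ℝ → ℝ} (hf : ContDiff ℝ (⊤ : ℕ∞) fun p : ℝ × ℝ => f p.1 p.2) (x t : ℝ) :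
    pdx f x t = fderiv ℝ (fun p : ℝ × ℝ => f p.1 p.2) (x, t) (1, 0) :=
  (aux_hasDerivAt_fst hf x t).deriv

lemma aux_hasDerivAt_pdx {f : ℝ → ℝ → ℝ} (hf : ContDiff ℝ (⊤ : ℕ∞) fun p : ℝ × ℝ => f p.1 p.2)
    (x t : ℝ) : HasDerivAt (fun x' => f x' t) (pdx f x t) x := by
  rw [aux_pdx_eq hf]; exact aux_hasDerivAt_fst hf x t

lemma aux_hasDerivAt_pdt {f : ℝ → ℝ → ℝ} (hf : ContDiff ℝ (⊤ : ℕ∞) fun p : ℝ × ℝ => f p.1 p.2)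
    (x t : ℝ) : HasDerivAt (fun t' => f x t') (pdt f x t) t := by
  have h1 : HasDerivAt (fun t' : ℝ => (x, t')) ((0 : ℝ), (1 : ℝ)) t :=
    (hasDerivAt_const t x).prodMk (hasDerivAt_id t)
  have h := ((hf.differentiable (by simp)).differentiableAt.hasFDerivAt.comp_hasDerivAt t h1)
  rwa [show pdt f x t = _ from h.deriv]

lemma aux_contDiff_pdx {f : ℝ → ℝ → ℝ} (hf : ContDiff ℝ (⊤ : ℕ∞) fun p : ℝ × ℝ => f p.1 p.2) :
    ContDiff ℝ (⊤ : ℕ∞) fun p : ℝ × ℝ => pdx f p.1 p.2 := by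
  have h : (fun p : ℝ × ℝ => pdx f p.1 p.2)
      = fun p : ℝ × ℝ => fderiv ℝ (fun q : ℝ × ℝ => f q.1 q.2) p (1, 0) := by
    funext p; exact aux_pdx_eq hf p.1 p.2
  rw [h]
  exact (hf.fderiv_right (le_refl _)).clm_apply contDiff_const

lemma aux_blkP_zero_zero {m : ℕ} (k : Fin m → ℝ) : blkP k 0 0 = 0 := by
  simp [blkP, Matrix.sum_apply, Matrix.single, Fin.succ_ne_zero]

lemma aux_blkP_succ_zero {m : ℕ} (k : Fin m → ℝ) (l : Fin m) : blkP k l.succ 0 = k l := by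
  simp [blkP, Matrix.sum_apply, Matrix.single, Fin.succ_ne_zero,
    (Fin.succ_ne_zero _).symm, Fin.succ_inj]

lemma aux_blkP_zero_succ {m : ℕ} (k : Fin m → ℝ) (l : Fin m) : blkP k 0 l.succ = -k l := by
  simp [blkP, Matrix.sum_apply, Matrix.single, Fin.succ_ne_zero,
    (Fin.succ_ne_zero _).symm, Fin.succ_inj]

lemma aux_blkP_succ_succ {m : ℕ} (k : Fin m → ℝ) (l l' : Fin m) : blkP k l.succ l'.succ = 0 := by
  simp [blkP, Matrix.sum_apply, Matrix.single, Fin.succ_ne_zero,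
    (Fin.succ_ne_zero _).symm]

lemma aux_blkQ_zero_zero {m : ℕ} (z : Fin m → ℝ) (ξ : Fin m → Fin m → ℝ) :
    blkQ z ξ 0 0 = 0 := by
  simp [blkQ, Matrix.add_apply, Matrix.sum_apply, Matrix.single,
    (Fin.succ_ne_zero _).symm, aux_blkP_zero_zero, Fin.succ_ne_zero]

lemma aux_blkQ_succ_zero {m : ℕ} (z : Fin m → ℝ) (ξ : Fin m → Fin m → ℝ) (l : Fin m) :
    blkQ z ξ l.succ 0 = z l := by
  simp [blkQ, Matrix.add_apply, Matrix.sum_apply, Matrix.single,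
    (Fin.succ_ne_zero _).symm, aux_blkP_succ_zero, Fin.succ_ne_zero]

lemma aux_hasDerivAt_euc {N : ℕ} {f : ℝ → EuclideanSpace ℝ (Fin N)}
    {v : EuclideanSpace ℝ (Fin N)} {x : ℝ}
    (h : ∀ i, HasDerivAt (fun x' => f x' i) (v i) x) : HasDerivAt f v x := by
  have hp : HasDerivAt (fun x' => (fun i => f x' i : Fin N → ℝ)) (fun i => v i) x :=
    hasDerivAt_pi.2 h
  exact ((EuclideanSpace.equiv (Fin N) ℝ).symm :
    (Fin N → ℝ) →L[ℝ] EuclideanSpace ℝ (Fin N)).hasFDerivAt.comp_hasDerivAt x hp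

lemma aux_euc_sum_apply {ι : Type*} {N : ℕ} (s : Finset ι)
    (f : ι → EuclideanSpace ℝ (Fin N)) (i : Fin N) :
    (∑ l ∈ s, f l) i = ∑ l ∈ s, f l i := by
  rw [WithLp.ofLp_sum, Finset.sum_apply]

end Aux

/-- from a solution `k` of the vmKdV equation and a frame `g` solving the
corresponding Lax pair, the curve `γ(x,t) = c(t) + ∫₀ˣ e₁(s,t) ds`, with
`Z = -((‖k‖²/2)e₁ + Σ (kᵢ)_x e_{i+1})` and `c(t) = ∫₀ᵗ Z(0,s) ds`, satisfies the
geometric Airy curve flow `γ_t = Z`. -/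
theorem stmt4 {m : ℕ}
    (g : ℝ → ℝ → Matrix (Fin (m + 1)) (Fin (m + 1)) ℝ)
    (k : Fin m → ℝ → ℝ → ℝ)
    (hg : ∀ i j, ContDiff ℝ (⊤ : ℕ∞) fun (p : ℝ × ℝ) => g p.1 p.2 i j)
    (hk : ∀ i, ContDiff ℝ (⊤ : ℕ∞) fun (p : ℝ × ℝ) => k i p.1 p.2)
    -- `k` solves the vmKdV equation
    (hvmkdv : ∀ i x t, pdt (k i) x t =
      -(pdx (pdx (pdx (k i))) x t
        + (3 / 2) * (∑ l : Fin m, (k l x t) ^ 2) * pdx (k i) x t))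
    -- `g` solves the Lax pair
    (hSO : ∀ x t, (g x t)ᵀ * g x t = 1 ∧ (g x t).det = 1)
    (hx : ∀ x t, (g x t)ᵀ * mdx g x t = blkP (fun i => k i x t))
    (ht : ∀ x t, (g x t)ᵀ * mdt g x t =
      blkQ (fun i => -(pdx (pdx (k i)) x t + (1 / 2) * (∑ l : Fin m, (k l x t) ^ 2) * k i x t))
           (fun i j => pdx (k i) x t * k j x t - k i x t * pdx (k j) x t))
    -- `Z = -((‖k‖²/2) e₁ + Σᵢ (kᵢ)_x e_{i+1})`
    (Z : ℝ → ℝ → EuclideanSpace ℝ (Fin (m + 1)))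
    (hZ : ∀ x t, Z x t =
      -(((∑ l : Fin m, (k l x t) ^ 2) / 2) • colv g 0 x t
        + ∑ i : Fin m, pdx (k i) x t • colv g i.succ x t))
    -- `γ(x,t) = c(t) + ∫₀ˣ e₁(s,t) ds` with `c(t) = ∫₀ᵗ Z(0,s) ds`
    (γ : ℝ → ℝ → EuclideanSpace ℝ (Fin (m + 1)))
    (hγ : ∀ x t, γ x t = (∫ s in (0 : ℝ)..t, Z 0 s) + ∫ s in (0 : ℝ)..x, colv g 0 s t) :
    -- conclusion: `γ_t = Z`
    ∀ x t, HasDerivAt (fun t' => γ x t') (Z x t) t := by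
  -- abbreviations
  set zf : Fin m → ℝ → ℝ → ℝ := fun i a b =>
    -(pdx (pdx (k i)) a b + (1 / 2) * (∑ l : Fin m, (k l a b) ^ 2) * k i a b) with hzf
  set et : ℝ → ℝ → EuclideanSpace ℝ (Fin (m + 1)) := fun a b =>
    ∑ l : Fin m, zf l a b • colv g l.succ a b with het
  -- smoothness of derivatives of k
  have hkx : ∀ i, ContDiff ℝ (⊤ : ℕ∞) fun p : ℝ × ℝ => pdx (k i) p.1 p.2 :=
    fun i => aux_contDiff_pdx (hk i)
  have hkxx : ∀ i, ContDiff ℝ (⊤ : ℕ∞) fun p : ℝ × ℝ => pdx (pdx (k i)) p.1 p.2 :=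
    fun i => aux_contDiff_pdx (hkx i)
  have hKc : ContDiff ℝ (⊤ : ℕ∞) fun p : ℝ × ℝ => ∑ l : Fin m, (k l p.1 p.2) ^ 2 :=
    ContDiff.sum fun l _ => (hk l).pow 2
  have hzfc : ∀ i, ContDiff ℝ (⊤ : ℕ∞) fun p : ℝ × ℝ => zf i p.1 p.2 := fun i =>
    ((hkxx i).add ((contDiff_const.mul hKc).mul (hk i))).neg
  -- continuity of columns (jointly)
  have hcolc : ∀ j, Continuous fun p : ℝ × ℝ => colv g j p.1 p.2 := by
    intro j
    exact ((EuclideanSpace.equiv (Fin (m + 1)) ℝ).symm :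
      (Fin (m + 1) → ℝ) →L[ℝ] EuclideanSpace ℝ (Fin (m + 1))).continuous.comp
      (continuous_pi fun i => (hg i j).continuous)
  have contEt : Continuous fun p : ℝ × ℝ => et p.1 p.2 := by
    refine continuous_finset_sum _ fun l _ => Continuous.fun_smul ?_ (hcolc l.succ)
    exact (hzfc l).continuous
  have contZ : Continuous fun p : ℝ × ℝ => Z p.1 p.2 := by
    have hrw : (fun p : ℝ × ℝ => Z p.1 p.2)
        = fun p : ℝ × ℝ => -(((∑ l : Fin m, (k l p.1 p.2) ^ 2) / 2) • colv g 0 p.1 p.2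
            + ∑ i : Fin m, pdx (k i) p.1 p.2 • colv g i.succ p.1 p.2) :=
      funext fun p => hZ p.1 p.2
    rw [hrw]
    exact (((hKc.continuous.div_const 2).smul (hcolc 0)).add
      (continuous_finset_sum _ fun i _ => ((hkx i).continuous).smul (hcolc i.succ))).neg
  -- the frame equations, rewritten as `g_t = g Q` and `g_x = g P`
  have hinv : ∀ a b, g a b * (g a b)ᵀ = 1 := fun a b => mul_eq_one_comm.mp (hSO a b).1
  have hmdt : ∀ a b, mdt g a b
      = g a b * blkQ (fun i => zf i a b)
          (fun i j => pdx (k i) a b * k j a b - k i a b * pdx (k j) a b) := by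
    intro a b
    calc mdt g a b = (g a b * (g a b)ᵀ) * mdt g a b := by rw [hinv, one_mul]
    _ = g a b * ((g a b)ᵀ * mdt g a b) := by rw [Matrix.mul_assoc]
    _ = _ := by rw [ht]
  have hmdx : ∀ a b, mdx g a b = g a b * blkP (fun i => k i a b) := by
    intro a b
    calc mdx g a b = (g a b * (g a b)ᵀ) * mdx g a b := by rw [hinv, one_mul]
    _ = g a b * ((g a b)ᵀ * mdx g a b) := by rw [Matrix.mul_assoc]
    _ = _ := by rw [hx]
  have hgt : ∀ a b (i j : Fin (m + 1)), HasDerivAt (fun b' => g a b' i j)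
      ((g a b * blkQ (fun i => zf i a b)
        (fun i j => pdx (k i) a b * k j a b - k i a b * pdx (k j) a b)) i j) b := by
    intro a b i j
    have h := aux_hasDerivAt_pdt (f := fun p q => g p q i j) (hg i j) a b
    have e : pdt (fun p q => g p q i j) a b
        = (g a b * blkQ (fun i => zf i a b)
            (fun i j => pdx (k i) a b * k j a b - k i a b * pdx (k j) a b)) i j := by
      show mdt g a b i j = _
      rw [hmdt a b]
    rwa [e] at h
  have hgx : ∀ a b (i j : Fin (m + 1)), HasDerivAt (fun a' => g a' b i j)
      ((g a b * blkP (fun i => k i a b)) i j) a := by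
    intro a b i j
    have h := aux_hasDerivAt_pdx (f := fun p q => g p q i j) (hg i j) a b
    have e : pdx (fun p q => g p q i j) a b = (g a b * blkP (fun i => k i a b)) i j := by
      show mdx g a b i j = _
      rw [hmdx a b]
    rwa [e] at h
  -- derivatives of columns
  have hcol0_t : ∀ a b, HasDerivAt (fun b' => colv g 0 a b') (et a b) b := by
    intro a b
    apply aux_hasDerivAt_euc
    intro i
    show HasDerivAt (fun b' => g a b' i 0) _ b
    have h := hgt a b i 0
    convert h using 1
    show (∑ l : Fin m, zf l a b • colv g l.succ a b) i = _
    rw [Matrix.mul_apply, Fin.sum_univ_succ, aux_blkQ_zero_zero, aux_euc_sum_apply]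
    simp only [aux_blkQ_succ_zero, PiLp.smul_apply, smul_eq_mul, mul_zero, zero_add]
    exact Finset.sum_congr rfl fun l _ => mul_comm (zf l a b) (g a b i l.succ)
  have hcol0_x : ∀ a b, HasDerivAt (fun a' => colv g 0 a' b)
      (∑ l : Fin m, k l a b • colv g l.succ a b) a := by
    intro a b
    apply aux_hasDerivAt_euc
    intro i
    show HasDerivAt (fun a' => g a' b i 0) _ a
    have h := hgx a b i 0
    convert h using 1
    rw [Matrix.mul_apply, Fin.sum_univ_succ, aux_blkP_zero_zero, aux_euc_sum_apply]
    simp only [aux_blkP_succ_zero, PiLp.smul_apply, smul_eq_mul, mul_zero, zero_add]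
    exact Finset.sum_congr rfl fun l _ => mul_comm (k l a b) (g a b i l.succ)
  have hcolsucc_x : ∀ (j : Fin m) a b, HasDerivAt (fun a' => colv g j.succ a' b)
      (-(k j a b) • colv g 0 a b) a := by
    intro j a b
    apply aux_hasDerivAt_euc
    intro i
    show HasDerivAt (fun a' => g a' b i j.succ) _ a
    have h := hgx a b i j.succ
    convert h using 1
    rw [Matrix.mul_apply, Fin.sum_univ_succ, aux_blkP_zero_succ]
    simp only [aux_blkP_succ_succ, mul_zero, Finset.sum_const_zero, add_zero,
      PiLp.smul_apply, smul_eq_mul]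
    ring_nf
    rfl
  -- `x`-derivative of `Z` equals `t`-derivative of `e₁`
  have hZx : ∀ a b, HasDerivAt (fun a' => Z a' b) (et a b) a := by
    intro a b
    have hrw : (fun a' => Z a' b)
        = fun a' => -(((∑ l : Fin m, (k l a' b) ^ 2) / 2) • colv g 0 a' b
            + ∑ i : Fin m, pdx (k i) a' b • colv g i.succ a' b) :=
      funext fun a' => hZ a' b
    rw [hrw]
    have hK : HasDerivAt (fun a' => (∑ l : Fin m, (k l a' b) ^ 2) / 2)
        ((∑ l : Fin m, 2 * k l a b ^ 1 * pdx (k l) a b) / 2) a := by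
      exact (HasDerivAt.fun_sum fun l _ => (aux_hasDerivAt_pdx (hk l) a b).fun_pow 2).div_const 2
    have hmain : HasDerivAt
        (fun a' => ((∑ l : Fin m, (k l a' b) ^ 2) / 2) • colv g 0 a' b
            + ∑ i : Fin m, pdx (k i) a' b • colv g i.succ a' b)
        (((∑ l : Fin m, (k l a b) ^ 2) / 2) • (∑ l : Fin m, k l a b • colv g l.succ a b)
            + ((∑ l : Fin m, 2 * k l a b ^ 1 * pdx (k l) a b) / 2) • colv g 0 a b
          + ∑ i : Fin m, (pdx (k i) a b • (-(k i a b) • colv g 0 a b)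
            + pdx (pdx (k i)) a b • colv g i.succ a b)) a := by
      exact (hK.smul (hcol0_x a b)).add (HasDerivAt.fun_sum fun i _ =>
        (aux_hasDerivAt_pdx (hkx i) a b).fun_smul (hcolsucc_x i a b))
    have := hmain.fun_neg
    refine this.congr_deriv (Eq.symm ?_)
    -- the algebraic identity
    have h1 : ∑ i' : Fin m, (pdx (k i') a b • (-(k i' a b) • colv g 0 a b)
          + pdx (pdx (k i')) a b • colv g i'.succ a b)
        = -(((∑ l : Fin m, 2 * k l a b ^ 1 * pdx (k l) a b) / 2) • colv g 0 a b)
          + ∑ i' : Fin m, pdx (pdx (k i')) a b • colv g i'.succ a b := by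
      rw [Finset.sum_add_distrib]
      congr 1
      have hs : ∀ i' : Fin m, pdx (k i') a b • (-(k i' a b) • colv g 0 a b)
          = (pdx (k i') a b * -(k i' a b)) • colv g 0 a b := fun i' => smul_smul _ _ _
      rw [Finset.sum_congr rfl fun i' _ => hs i', ← Finset.sum_smul, ← neg_smul]
      congr 1
      rw [Finset.sum_div, ← Finset.sum_neg_distrib]
      exact Finset.sum_congr rfl fun l _ => by ring
    have h2 : ((∑ l : Fin m, (k l a b) ^ 2) / 2) • (∑ l : Fin m, k l a b • colv g l.succ a b)
        = ∑ l : Fin m, (((∑ l' : Fin m, (k l' a b) ^ 2) / 2) * k l a b) • colv g l.succ a b := by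
      rw [Finset.smul_sum]
      exact Finset.sum_congr rfl fun l _ => smul_smul _ _ _
    have h3 : ∀ v w y : EuclideanSpace ℝ (Fin (m + 1)), v + y + (-y + w) = v + w := by
      intros v w y; abel
    rw [h1, h2, h3]
    show (∑ l : Fin m, zf l a b • colv g l.succ a b) = _
    rw [← Finset.sum_add_distrib, ← Finset.sum_neg_distrib]
    refine Finset.sum_congr rfl fun l _ => ?_
    show zf l a b • colv g l.succ a b = _
    rw [hzf, ← add_smul, ← neg_smul]
    congr 1
    ring
  -- Step A : derivative of `c`
  have hcontZ0 : Continuous fun s => Z 0 s := by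
    have : (fun s => Z 0 s) = (fun p : ℝ × ℝ => Z p.1 p.2) ∘ fun s => ((0 : ℝ), s) := rfl
    rw [this]; exact contZ.comp (continuous_const.prodMk continuous_id)
  intro x t
  have hc : HasDerivAt (fun t' => ∫ s in (0 : ℝ)..t', Z 0 s) (Z 0 t) t :=
    intervalIntegral.integral_hasDerivAt_right (hcontZ0.intervalIntegrable _ _)
      (hcontZ0.stronglyMeasurableAtFilter _ _) hcontZ0.continuousAt
  -- Step B : differentiation under the integral sign
  have hcole : ∀ b, Continuous fun s => colv g 0 s b := by
    intro b
    have : (fun s => colv g 0 s b) = (fun p : ℝ × ℝ => colv g 0 p.1 p.2) ∘ fun s => (s, b) := rfl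
    rw [this]; exact (hcolc 0).comp (continuous_id.prodMk continuous_const)
  have hetcont : ∀ b, Continuous fun s => et s b := by
    intro b
    have : (fun s => et s b) = (fun p : ℝ × ℝ => et p.1 p.2) ∘ fun s => (s, b) := rfl
    rw [this]; exact contEt.comp (continuous_id.prodMk continuous_const)
  have hG : HasDerivAt (fun t' => ∫ s in (0 : ℝ)..x, colv g 0 s t')
      (∫ s in (0 : ℝ)..x, et s t) t := by
    obtain ⟨C, hC⟩ : ∃ C, ∀ p ∈ (Set.uIcc 0 x ×ˢ Set.Icc (t - 1) (t + 1) : Set (ℝ × ℝ)),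
        ‖et p.1 p.2‖ ≤ C :=
      (isCompact_uIcc.prod isCompact_Icc).exists_bound_of_continuousOn contEt.continuousOn
    refine (intervalIntegral.hasDerivAt_integral_of_dominated_loc_of_deriv_le
      (F := fun t' s => colv g 0 s t') (F' := fun t' s => et s t') (bound := fun _ => C)
      (Metric.ball_mem_nhds t one_pos) ?_ ?_ ?_ ?_ ?_ ?_).2
    · filter_upwards with t' using (hcole t').aestronglyMeasurable.restrict
    · exact (hcole t).intervalIntegrable _ _
    · exact (hetcont t).aestronglyMeasurable.restrict
    · filter_upwards with s
      intro hs t' ht'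
      refine hC (s, t') ⟨Set.uIoc_subset_uIcc hs, ?_⟩
      rw [Real.ball_eq_Ioo] at ht'
      exact ⟨le_of_lt ht'.1, le_of_lt ht'.2⟩
    · exact intervalIntegrable_const
    · filter_upwards with s
      intro hs t' ht'
      exact hcol0_t s t'
  -- Step C : fundamental theorem of calculus for `Z` in `x`
  have hsub : ∫ s in (0 : ℝ)..x, et s t = Z x t - Z 0 t :=
    intervalIntegral.integral_eq_sub_of_hasDerivAt (fun s _ => hZx s t)
      ((hetcont t).intervalIntegrable _ _)
  -- assembly
  have hfun : (fun t' => γ x t')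
      = fun t' => (∫ s in (0 : ℝ)..t', Z 0 s) + ∫ s in (0 : ℝ)..x, colv g 0 s t' :=
    funext fun t' => hγ x t'
  rw [hfun]
  have hfinal := hc.add hG
  rw [hsub] at hfinal
  refine hfinal.congr_deriv (Eq.symm ?_)
  abel
end

section
/- Suppose g: ℝ² → SO(n) satisfies g_x = gA and g_t = gB where A(x+2π, t) = A(x,t) and B(x+2π, t) = B(x,t) for all x,t, and g(x+2π, 0) = g(x, 0) for all x. Then g(x+2π, t) = g(x,t) for all x and t. -/
open scoped BigOperators
open Matrix

attribute [local instance] Matrix.normedAddCommGroup Matrix.normedSpace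

private lemma mat_mul_norm_le {n : ℕ} (w M : Matrix (Fin n) (Fin n) ℝ) (D : ℝ) (hD : 0 ≤ D)
    (hM : ∀ k j, |M k j| ≤ D) : ‖w * M‖ ≤ (n * D) * ‖w‖ := by
  rw [Matrix.norm_le_iff (by positivity)]
  intro i
  intro j
  calc ‖(w * M) i j‖ = |∑ k, w i k * M k j| := by simp [Matrix.mul_apply]
    _ ≤ ∑ k, |w i k * M k j| := Finset.abs_sum_le_sum_abs _ _
    _ ≤ ∑ _k : Fin n, ‖w‖ * D := by
        apply Finset.sum_le_sum
        intro k _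
        rw [abs_mul]
        have h1 : |w i k| ≤ ‖w‖ := by
          calc |w i k| = ‖w i k‖ := rfl
            _ ≤ ‖w i‖ := norm_le_pi_norm _ _
            _ ≤ ‖w‖ := norm_le_pi_norm _ _
        exact mul_le_mul h1 (hM k j) (abs_nonneg _) (norm_nonneg _)
    _ = (n * D) * ‖w‖ := by simp [Finset.sum_const]; ring

private lemma mat_hasDerivAt {n : ℕ} (f : ℝ → Matrix (Fin n) (Fin n) ℝ)
    (f' : Matrix (Fin n) (Fin n) ℝ) (t : ℝ)
    (h : ∀ i j, HasDerivAt (fun t => f t i j) (f' i j) t) : HasDerivAt f f' t := by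
  refine hasDerivAt_pi.2 ?_
  intro i
  rw [hasDerivAt_pi]
  exact h i

/-- if `g : ℝ² → SO(n)` satisfies `g_x = gA`, `g_t = gB` with `A, B`
`2π`-periodic in `x`, and `g(·,0)` is `2π`-periodic, then `g(·,t)` is `2π`-periodic
for every `t`. -/
theorem stmt5 {n : ℕ}
    (A B : ℝ → ℝ → Matrix (Fin n) (Fin n) ℝ)
    (g : ℝ → ℝ → Matrix (Fin n) (Fin n) ℝ)
    (hA : ∀ i j, ContDiff ℝ (⊤ : ℕ∞) fun (p : ℝ × ℝ) => A p.1 p.2 i j)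
    (hB : ∀ i j, ContDiff ℝ (⊤ : ℕ∞) fun (p : ℝ × ℝ) => B p.1 p.2 i j)
    (hAskew : ∀ x t, (A x t)ᵀ = -A x t)
    (hBskew : ∀ x t, (B x t)ᵀ = -B x t)
    (hg : ∀ i j, ContDiff ℝ (⊤ : ℕ∞) fun (p : ℝ × ℝ) => g p.1 p.2 i j)
    (hSO : ∀ x t, (g x t)ᵀ * g x t = 1 ∧ (g x t).det = 1)
    (hgx : ∀ x t, mdx g x t = g x t * A x t)
    (hgt : ∀ x t, mdt g x t = g x t * B x t)
    (hAper : ∀ x t, A (x + 2 * Real.pi) t = A x t)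
    (hBper : ∀ x t, B (x + 2 * Real.pi) t = B x t)
    (hg0per : ∀ x, g (x + 2 * Real.pi) 0 = g x 0) :
    ∀ x t, g (x + 2 * Real.pi) t = g x t := by
  intro x t
  -- entrywise derivatives in t
  have hDeriv : ∀ (x' : ℝ) (s : ℝ),
      HasDerivAt (fun t' => g x' t') (g x' s * B x' s) s := by
    intro x' s
    apply mat_hasDerivAt
    intro i j
    have hdiff : DifferentiableAt ℝ (fun t' => g x' t' i j) s := by
      have : (fun t' => g x' t' i j) = (fun p : ℝ × ℝ => g p.1 p.2 i j) ∘ fun t' => (x', t') :=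
        rfl
      rw [this]
      exact (((hg i j).differentiable (by simp)).comp
        ((differentiable_const x').prodMk differentiable_id)).differentiableAt
    have := hdiff.hasDerivAt
    have hd : deriv (fun t' => g x' t' i j) s = (g x' s * B x' s) i j := by
      have h := congrFun (congrFun (hgt x' s) i) j
      exact h
    rwa [hd] at this
  -- the two solutions
  set F := fun s : ℝ => g (x + 2 * Real.pi) s with hF
  set G := fun s : ℝ => g x s with hG
  have hF' : ∀ s, HasDerivAt F (F s * B x s) s := by
    intro s
    have := hDeriv (x + 2 * Real.pi) s
    rwa [hBper] at this
  have hG' : ∀ s, HasDerivAt G (G s * B x s) s := fun s => hDeriv x s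
  -- the interval
  set a : ℝ := -(|t| + 1)
  set b : ℝ := |t| + 1
  have hab : a < b := by
    have := abs_nonneg t
    simp only [a, b]; linarith
  have hmem : t ∈ Set.Icc a b := by
    constructor
    · have := neg_abs_le t; simp only [a]; linarith
    · have := le_abs_self t; simp only [b]; linarith
  have h0 : (0 : ℝ) ∈ Set.Ioo a b := by
    constructor
    · have := abs_nonneg t; simp only [a]; linarith
    · have := abs_nonneg t; simp only [b]; linarith
  -- bound B on the interval
  have hBcont : Continuous fun s : ℝ => B x s := by
    apply continuous_pi; intro i; apply continuous_pi; intro j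
    exact ((hB i j).continuous).comp (continuous_const.prodMk continuous_id)
  obtain ⟨C, hC⟩ := (isCompact_Icc (a := a) (b := b)).exists_bound_of_continuousOn
    (hBcont.norm.continuousOn)
  set D : ℝ := max C 0 with hDdef
  have hD0 : 0 ≤ D := le_max_right _ _
  have hBbound : ∀ s ∈ Set.Icc a b, ∀ k j, |B x s k j| ≤ D := by
    intro s hs k j
    calc |B x s k j| = ‖B x s k j‖ := rfl
      _ ≤ ‖B x s k‖ := norm_le_pi_norm _ _
      _ ≤ ‖B x s‖ := norm_le_pi_norm _ _
      _ ≤ C := by have := hC s hs; rwa [norm_norm] at this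
      _ ≤ D := le_max_left _ _
  -- clamped vector field
  set clamp : ℝ → ℝ := fun s => max a (min s b) with hclamp
  have hclampmem : ∀ s, clamp s ∈ Set.Icc a b := by
    intro s
    constructor
    · exact le_max_left _ _
    · exact max_le hab.le (min_le_right _ _)
  have hclampeq : ∀ s ∈ Set.Ioo a b, clamp s = s := by
    intro s hs
    simp only [clamp]
    rw [min_eq_left hs.2.le, max_eq_right hs.1.le]
  set v : ℝ → Matrix (Fin n) (Fin n) ℝ → Matrix (Fin n) (Fin n) ℝ :=
    fun s y => y * B x (clamp s) with hv
  set K : NNReal := ⟨n * D, by positivity⟩ with hK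
  have hlip : ∀ s, LipschitzWith K (v s) := by
    intro s
    apply LipschitzWith.of_dist_le_mul
    intro y z
    rw [dist_eq_norm, dist_eq_norm]
    have : v s y - v s z = (y - z) * B x (clamp s) := by
      simp only [v, sub_mul]
    rw [this]
    exact mat_mul_norm_le _ _ D hD0 (hBbound _ (hclampmem s))
  -- apply uniqueness
  have key : Set.EqOn F G (Set.Icc a b) := by
    apply ODE_solution_unique_of_mem_Icc (s := fun _ => Set.univ)
      (fun s _ => (hlip s).lipschitzOnWith) h0
    · exact continuousOn_of_forall_continuousAt fun s _ => (hF' s).continuousAt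
    · intro s hs
      have := hF' s
      simp only [v, hclampeq s hs]; exact this
    · intro s _; trivial
    · exact continuousOn_of_forall_continuousAt fun s _ => (hG' s).continuousAt
    · intro s hs
      have := hG' s
      simp only [v, hclampeq s hs]; exact this
    · intro s _; trivial
    · exact hg0per x
  exact key hmem
end

section
/- Let γ(x,t) be a solution of the geometric Airy curve flow γ_t = -((1/2)‖H‖²e₁ + ∇^⊥_{e₁}H), written in a parallel frame as γ_t = -((‖k‖²/2)e₁ + Σᵢ(kᵢ)_x e_{i+1}), with the frame (e₁,...,eₙ)(x,t), principal curvatures k(x,t), all periodic in x with period 2π. Then η(t) := γ(2π,t) - γ(0,t) is constant in t; in particular, if γ(·,0) is a closed curve then γ(·,t) is closed for all t. -/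
open scoped BigOperators

/-- for a solution `γ` of the geometric Airy curve flow
`γ_t = -((‖k‖²/2)e₁ + Σᵢ(kᵢ)_x e_{i+1})` (in a parallel frame), with frame and
principal curvatures `2π`-periodic in `x`, the vector `η(t) = γ(2π,t) - γ(0,t)` is
constant in `t`; in particular, if `γ(·,0)` is closed then `γ(·,t)` is closed for all `t`. -/
theorem stmt6 {m : ℕ}
    (γ : ℝ → ℝ → EuclideanSpace ℝ (Fin (m + 1)))
    (e : Fin (m + 1) → ℝ → ℝ → EuclideanSpace ℝ (Fin (m + 1)))
    (k : Fin m → ℝ → ℝ → ℝ)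
    (hγ : ContDiff ℝ (⊤ : ℕ∞) (Function.uncurry γ))
    (he : ∀ i, ContDiff ℝ (⊤ : ℕ∞) (Function.uncurry (e i)))
    (hk : ∀ i, ContDiff ℝ (⊤ : ℕ∞) (Function.uncurry (k i)))
    -- arc-length parametrization and parallel frame
    (harc : ∀ x t, ‖deriv (fun x' => γ x' t) x‖ = 1)
    (he1 : ∀ x t, e 0 x t = deriv (fun x' => γ x' t) x)
    (hframe1 : ∀ x t, deriv (fun x' => e 0 x' t) x = ∑ i : Fin m, k i x t • e i.succ x t)
    (hframe2 : ∀ (i : Fin m) x t,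
      deriv (fun x' => e i.succ x' t) x = -(k i x t) • e 0 x t)
    -- periodicity of frame and curvatures in `x` with period `2π`
    (heper : ∀ (i : Fin (m + 1)) x t, e i (x + 2 * Real.pi) t = e i x t)
    (hkper : ∀ (i : Fin m) x t, k i (x + 2 * Real.pi) t = k i x t)
    -- the geometric Airy curve flow in the parallel frame
    (hflow : ∀ x t, deriv (fun t' => γ x t') t =
      -(((∑ l : Fin m, (k l x t) ^ 2) / 2) • e 0 x t
        + ∑ i : Fin m, deriv (fun x' => k i x' t) x • e i.succ x t)) :
    (∀ t, γ (2 * Real.pi) t - γ 0 t = γ (2 * Real.pi) 0 - γ 0 0) ∧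
    (γ (2 * Real.pi) 0 = γ 0 0 → ∀ t, γ (2 * Real.pi) t = γ 0 t) := by

  have hdx : ∀ x, Differentiable ℝ (fun t => γ x t) := fun x => by
    have h := (hγ.differentiable (by simp)).comp ((differentiable_const x).prodMk differentiable_id)
    exact h
  have hkey : ∀ t, deriv (fun t' => γ (2 * Real.pi) t' - γ 0 t') t = 0 := by
    intro t
    rw [deriv_fun_sub ((hdx _).differentiableAt) ((hdx _).differentiableAt),
      hflow (2 * Real.pi) t, hflow 0 t]
    have he' : ∀ i : Fin (m + 1), e i (2 * Real.pi) t = e i 0 t := fun i => by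
      have := heper i 0 t; rwa [zero_add] at this
    have hk' : ∀ i : Fin m, k i (2 * Real.pi) t = k i 0 t := fun i => by
      have := hkper i 0 t; rwa [zero_add] at this
    have hkd : ∀ i : Fin m,
        deriv (fun x' => k i x' t) (2 * Real.pi) = deriv (fun x' => k i x' t) 0 := by
      intro i
      have hfun : (fun x => k i (x + 2 * Real.pi) t) = fun x => k i x t :=
        funext fun x => hkper i x t
      calc deriv (fun x' => k i x' t) (2 * Real.pi)
          = deriv (fun x => k i (x + 2 * Real.pi) t) 0 := by
            have h0 := deriv_comp_add_const (fun x' => k i x' t) (2 * Real.pi) 0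
            rw [zero_add] at h0; exact h0.symm
        _ = deriv (fun x' => k i x' t) 0 := by rw [hfun]
    simp only [he', hk', hkd, sub_self]
  have hconst : ∀ t, γ (2 * Real.pi) t - γ 0 t = γ (2 * Real.pi) 0 - γ 0 0 := fun t =>
    is_const_of_deriv_eq_zero ((hdx _).sub (hdx _)) hkey t 0
  refine ⟨hconst, fun h t => ?_⟩
  have h2 := hconst t
  rw [h, sub_self] at h2
  exact sub_eq_zero.mp h2
end

section
/- With a = e₂₁ - e₁₂ ∈ so(n+1) and u = Ψ(k) for smooth k: ℝ → ℝ^{n-1}, there exists a unique formal series Q(u,λ) = aλ + Σ_{i≥0} Qᵢ(u)λ^{-i} satisfying [∂_x + aλ + u, Q(u,λ)] = 0 with Q conjugate to aλ, and the first coefficients are: z₀ = k, ξ₀ = 0, y₁ = -‖k‖²/2, η₁ = -k_x, z₂ = -(k_{xx} + (1/2)‖k‖²k), ξ₂ = -k k_xᵗ + k_x kᵗ, y₃ = kᵗk_{xx} - ‖k_x‖²/2 + (3/8)‖k‖⁴, η₃ = k_{xxx} + (3/2)‖k‖²k_x, where Q_{2j-1} = [[0, -y_{2j-1}, -η_{2j-1}ᵗ],[y_{2j-1},0,0],[η_{2j-1},0,0]]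 and Q_{2j} = [[0,0,0],[0,0,-z_{2j}ᵗ],[0,z_{2j},ξ_{2j}]] in 1+1+(n-1) block form. -/
open scoped BigOperators
open Matrix

/-- `a = e₂₁ - e₁₂ ∈ so(n+1)` (here `n+1 = m+2`) -/
noncomputable def aMat (m : ℕ) : Matrix (Fin (m + 2)) (Fin (m + 2)) ℝ :=
  Matrix.single 1 0 1 - Matrix.single 0 1 1

/-- `Ψ(z) = [[0,0,0],[0,0,-zᵗ],[0,z,0]]` in `1+1+m` block form -/
noncomputable def PsiM {m : ℕ} (z : Fin m → ℝ) : Matrix (Fin (m + 2)) (Fin (m + 2)) ℝ :=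
  ∑ j : Fin m, z j •
    (Matrix.single j.succ.succ 1 1 - Matrix.single 1 j.succ.succ 1)

/-- the odd-type block matrix `[[0,-y,-ηᵗ],[y,0,0],[η,0,0]]` -/
noncomputable def oddM {m : ℕ} (y : ℝ) (η : Fin m → ℝ) :
    Matrix (Fin (m + 2)) (Fin (m + 2)) ℝ :=
  y • (Matrix.single 1 0 1 - Matrix.single 0 1 1)
    + ∑ j : Fin m, η j •
        (Matrix.single j.succ.succ 0 1 - Matrix.single 0 j.succ.succ 1)

/-- the even-type block matrix `[[0,0,0],[0,0,-zᵗ],[0,z,ξ]]` -/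
noncomputable def evenM {m : ℕ} (z : Fin m → ℝ) (ξ : Fin m → Fin m → ℝ) :
    Matrix (Fin (m + 2)) (Fin (m + 2)) ℝ :=
  PsiM z + ∑ j : Fin m, ∑ j' : Fin m, ξ j j' • Matrix.single j.succ.succ j'.succ.succ 1

/-- entrywise derivative of a matrix-valued function on ℝ -/
noncomputable def mderiv {N : ℕ} (f : ℝ → Matrix (Fin N) (Fin N) ℝ) (x : ℝ) :
    Matrix (Fin N) (Fin N) ℝ :=
  Matrix.of fun i j => deriv (fun x' => f x' i j) x

variable {m : ℕ}
@[simp] lemma ss_eq_zero (j : Fin m) : ((j.succ.succ : Fin (m+2)) = 0) ↔ False := by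
  simp [Fin.ext_iff]
@[simp] lemma zero_eq_ss (j : Fin m) : ((0 : Fin (m+2)) = j.succ.succ) ↔ False := by
  simp [Fin.ext_iff]
@[simp] lemma ss_eq_one (j : Fin m) : ((j.succ.succ : Fin (m+2)) = 1) ↔ False := by
  simp [Fin.ext_iff]
@[simp] lemma one_eq_ss (j : Fin m) : ((1 : Fin (m+2)) = j.succ.succ) ↔ False := by
  simp [Fin.ext_iff]
@[simp] lemma ss_eq_ss {j j' : Fin m} : ((j.succ.succ : Fin (m+2)) = j'.succ.succ) ↔ j = j' := by
  simp [Fin.ext_iff]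

section apply
variable (y : ℝ) (η : Fin m → ℝ) (z : Fin m → ℝ) (ξ : Fin m → Fin m → ℝ) (j j' : Fin m)

@[simp] lemma oddM_00 : oddM y η 0 0 = 0 := by simp [oddM, Matrix.sum_apply, Matrix.single]
@[simp] lemma oddM_01 : oddM y η 0 1 = -y := by simp [oddM, Matrix.sum_apply, Matrix.single]
@[simp] lemma oddM_0s : oddM y η 0 j.succ.succ = -η j := by
  simp [oddM, Matrix.sum_apply, Matrix.single]
@[simp] lemma oddM_10 : oddM y η 1 0 = y := by simp [oddM, Matrix.sum_apply, Matrix.single]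
@[simp] lemma oddM_11 : oddM y η 1 1 = 0 := by simp [oddM, Matrix.sum_apply, Matrix.single]
@[simp] lemma oddM_1s : oddM y η 1 j.succ.succ = 0 := by
  simp [oddM, Matrix.sum_apply, Matrix.single]
@[simp] lemma oddM_s0 : oddM y η j.succ.succ 0 = η j := by
  simp [oddM, Matrix.sum_apply, Matrix.single]
@[simp] lemma oddM_s1 : oddM y η j.succ.succ 1 = 0 := by
  simp [oddM, Matrix.sum_apply, Matrix.single]
@[simp] lemma oddM_ss : oddM y η j.succ.succ j'.succ.succ = 0 := by
  simp [oddM, Matrix.sum_apply, Matrix.single]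

@[simp] lemma psiM_00 : PsiM z 0 0 = 0 := by simp [PsiM, Matrix.sum_apply, Matrix.single]
@[simp] lemma psiM_01 : PsiM z 0 1 = 0 := by simp [PsiM, Matrix.sum_apply, Matrix.single]
@[simp] lemma psiM_0s : PsiM z 0 j.succ.succ = 0 := by
  simp [PsiM, Matrix.sum_apply, Matrix.single]
@[simp] lemma psiM_10 : PsiM z 1 0 = 0 := by simp [PsiM, Matrix.sum_apply, Matrix.single]
@[simp] lemma psiM_11 : PsiM z 1 1 = 0 := by simp [PsiM, Matrix.sum_apply, Matrix.single]
@[simp] lemma psiM_1s : PsiM z 1 j.succ.succ = -z j := by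
  simp [PsiM, Matrix.sum_apply, Matrix.single]
@[simp] lemma psiM_s0 : PsiM z j.succ.succ 0 = 0 := by
  simp [PsiM, Matrix.sum_apply, Matrix.single]
@[simp] lemma psiM_s1 : PsiM z j.succ.succ 1 = z j := by
  simp [PsiM, Matrix.sum_apply, Matrix.single]
@[simp] lemma psiM_ss : PsiM z j.succ.succ j'.succ.succ = 0 := by
  simp [PsiM, Matrix.sum_apply, Matrix.single]

@[simp] lemma evenM_00 : evenM z ξ 0 0 = 0 := by simp [evenM, Matrix.sum_apply, Matrix.single]
@[simp] lemma evenM_01 : evenM z ξ 0 1 = 0 := by simp [evenM, Matrix.sum_apply, Matrix.single]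
@[simp] lemma evenM_0s : evenM z ξ 0 j.succ.succ = 0 := by
  simp [evenM, Matrix.sum_apply, Matrix.single]
@[simp] lemma evenM_10 : evenM z ξ 1 0 = 0 := by simp [evenM, Matrix.sum_apply, Matrix.single]
@[simp] lemma evenM_11 : evenM z ξ 1 1 = 0 := by simp [evenM, Matrix.sum_apply, Matrix.single]
@[simp] lemma evenM_1s : evenM z ξ 1 j.succ.succ = -z j := by
  simp [evenM, Matrix.sum_apply, Matrix.single]
@[simp] lemma evenM_s0 : evenM z ξ j.succ.succ 0 = 0 := by
  simp [evenM, Matrix.sum_apply, Matrix.single]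
@[simp] lemma evenM_s1 : evenM z ξ j.succ.succ 1 = z j := by
  simp [evenM, Matrix.sum_apply, Matrix.single]
@[simp] lemma evenM_ss : evenM z ξ j.succ.succ j'.succ.succ = ξ j j' := by
  simp [evenM, Matrix.sum_apply, Matrix.single, ite_and, Finset.sum_ite_eq, Finset.sum_ite_eq']

@[simp] lemma aMat_00 : aMat m 0 0 = 0 := by simp [aMat, Matrix.single]
@[simp] lemma aMat_01 : aMat m 0 1 = -1 := by simp [aMat, Matrix.single]
@[simp] lemma aMat_0s : aMat m 0 j.succ.succ = 0 := by simp [aMat, Matrix.single]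
@[simp] lemma aMat_10 : aMat m 1 0 = 1 := by simp [aMat, Matrix.single]
@[simp] lemma aMat_11 : aMat m 1 1 = 0 := by simp [aMat, Matrix.single]
@[simp] lemma aMat_1s : aMat m 1 j.succ.succ = 0 := by simp [aMat, Matrix.single]
@[simp] lemma aMat_s0 : aMat m j.succ.succ 0 = 0 := by simp [aMat, Matrix.single]
@[simp] lemma aMat_s1 : aMat m j.succ.succ 1 = 0 := by simp [aMat, Matrix.single]
@[simp] lemma aMat_ss : aMat m j.succ.succ j'.succ.succ = 0 := by simp [aMat, Matrix.single]
end apply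

lemma sum_fin_split (f : Fin (m+2) → ℝ) :
    ∑ i, f i = f 0 + f 1 + ∑ j : Fin m, f j.succ.succ := by
  rw [Fin.sum_univ_succ, Fin.sum_univ_succ, Fin.succ_zero_eq_one]; ring

lemma fin_cases3 {P : Fin (m+2) → Prop} (h0 : P 0) (h1 : P 1)
    (hs : ∀ j : Fin m, P j.succ.succ) (p : Fin (m+2)) : P p := by
  refine Fin.cases h0 (fun i => ?_) p
  refine Fin.cases ?_ (fun j => hs j) i
  simpa [Fin.succ_zero_eq_one] using h1

lemma top_step (kv : Fin m → ℝ) :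
    aMat m * evenM kv 0 - evenM kv 0 * aMat m
      + (PsiM kv * aMat m - aMat m * PsiM kv) = 0 := by
  ext p q
  induction p using fin_cases3 <;> induction q using fin_cases3 <;>
    simp [Matrix.mul_apply, sum_fin_split, Matrix.sub_apply, Matrix.add_apply]

lemma odd_step (kv : Fin m → ℝ) (y : ℝ → ℝ) (η : Fin m → ℝ → ℝ)
    (zv : Fin m → ℝ) (ξv : Fin m → Fin m → ℝ) (x : ℝ)
    (hy : deriv y x = ∑ l, kv l * η l x)
    (hz : ∀ j, zv j = deriv (η j) x + y x * kv j) :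
    mderiv (fun t => oddM (y t) (fun j => η j t)) x
      + (PsiM kv * oddM (y x) (fun j => η j x)
          - oddM (y x) (fun j => η j x) * PsiM kv)
      + (aMat m * evenM zv ξv - evenM zv ξv * aMat m) = 0 := by
  ext p q
  induction p using fin_cases3 <;> induction q using fin_cases3 <;>
    simp [Matrix.mul_apply, sum_fin_split, Matrix.sub_apply, Matrix.add_apply,
      mderiv, hy, hz, Finset.mul_sum, deriv_const] <;>
    ring_nf <;>
    simp [Finset.sum_comm, mul_comm]

lemma anti_sum (kv : Fin m → ℝ) (ξ : Fin m → Fin m → ℝ → ℝ) (x : ℝ)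
    (hanti : ∀ j j', ξ j j' x = -ξ j' j x) (j : Fin m) :
    -∑ l, kv l * ξ l j x - ∑ l, ξ j l x * kv l = 0 := by
  rw [Finset.sum_congr rfl (fun l _ => by rw [hanti l j])]
  rw [Finset.sum_congr (g := fun l => -(ξ j l x * kv l)) rfl (fun l _ => by ring)]
  simp

lemma even_step (kv : Fin m → ℝ) (z : Fin m → ℝ → ℝ) (ξ : Fin m → Fin m → ℝ → ℝ)
    (yv : ℝ) (ηv : Fin m → ℝ) (x : ℝ)
    (hanti : ∀ j j', ξ j j' x = -ξ j' j x)
    (hξ : ∀ j j', deriv (ξ j j') x = kv j * z j' x - z j x * kv j')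
    (hη : ∀ j, ηv j = ∑ l, ξ j l x * kv l - deriv (z j) x) :
    mderiv (fun t => evenM (fun j => z j t) (fun j j' => ξ j j' t)) x
      + (PsiM kv * evenM (fun j => z j x) (fun j j' => ξ j j' x)
          - evenM (fun j => z j x) (fun j j' => ξ j j' x) * PsiM kv)
      + (aMat m * oddM yv ηv - oddM yv ηv * aMat m) = 0 := by
  ext p q
  induction p using fin_cases3 <;> induction q using fin_cases3 <;>
    simp [Matrix.mul_apply, sum_fin_split, Matrix.sub_apply, Matrix.add_apply,
      mderiv, hξ, hη, deriv_const] <;>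
    ring_nf
  all_goals first
    | exact anti_sum kv ξ x hanti _
    | (rw [Finset.sum_congr (g := fun l => z l x * kv l) rfl (fun l _ => mul_comm _ _)]; ring)
lemma primitive_hasDerivAt {f : ℝ → ℝ} (hf : Continuous f) (x : ℝ) :
    HasDerivAt (fun u => ∫ t in (0:ℝ)..u, f t) (f x) x :=
  (hf.integral_hasStrictDerivAt 0 x).hasDerivAt
lemma primitive_contDiff {f : ℝ → ℝ} (hf : ContDiff ℝ (⊤:ℕ∞) f) :
    ContDiff ℝ (⊤:ℕ∞) (fun u => ∫ t in (0:ℝ)..u, f t) := by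
  have hD := primitive_hasDerivAt hf.continuous
  have hdiff : Differentiable ℝ (fun u => ∫ t in (0:ℝ)..u, f t) :=
    fun x => (hD x).differentiableAt
  have hderiv : deriv (fun u => ∫ t in (0:ℝ)..u, f t) = f := funext fun x => (hD x).deriv
  rw [contDiff_infty_iff_deriv]
  exact ⟨hdiff, by rw [hderiv]; exact hf⟩
lemma Dtop {f : ℝ → ℝ} (hf : ContDiff ℝ (⊤:ℕ∞) f) : ContDiff ℝ (⊤:ℕ∞) (deriv f) :=
  (contDiff_infty_iff_deriv.mp hf).2
lemma hD {f : ℝ → ℝ} (hf : ContDiff ℝ (⊤:ℕ∞) f) (x : ℝ) : HasDerivAt f (deriv f x) x :=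
  ((hf.differentiable (by simp)) x).hasDerivAt

lemma sum_sq_hasDerivAt {m : ℕ} (f : Fin m → ℝ → ℝ) (hf : ∀ j, ContDiff ℝ (⊤:ℕ∞) (f j)) (x : ℝ) :
    HasDerivAt (fun x => ∑ l, (f l x)^2) (2*∑ l, f l x * deriv (f l) x) x := by
  have h := HasDerivAt.fun_sum (u := Finset.univ)
    (fun l (_ : l ∈ Finset.univ) => (hD (hf l) x).fun_pow 2)
  rw [Finset.mul_sum]
  refine h.congr_deriv ?_
  exact Finset.sum_congr rfl fun l _ => by push_cast; ring

section Expl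
variable {m : ℕ} (k : Fin m → ℝ → ℝ)

noncomputable def y1F : ℝ → ℝ := fun x => -(∑ l, (k l x)^2)/2
noncomputable def eta1F (j : Fin m) : ℝ → ℝ := fun x => -deriv (k j) x
noncomputable def z2F (j : Fin m) : ℝ → ℝ :=
  fun x => -(deriv (deriv (k j)) x + (1/2)*(∑ l, (k l x)^2)*k j x)
noncomputable def xi2F (j j' : Fin m) : ℝ → ℝ :=
  fun x => -(k j x * deriv (k j') x) + deriv (k j) x * k j' x
noncomputable def y3F : ℝ → ℝ :=
  fun x => ∑ l, k l x * deriv (deriv (k l)) x - (∑ l, (deriv (k l) x)^2)/2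
    + (3/8)*(∑ l, (k l x)^2)^2
noncomputable def eta3F (j : Fin m) : ℝ → ℝ :=
  fun x => deriv (deriv (deriv (k j))) x + (3/2)*(∑ l, (k l x)^2)*deriv (k j) x
noncomputable def z4F (j : Fin m) : ℝ → ℝ :=
  fun x => deriv (eta3F k j) x + y3F k x * k j x

variable (hk : ∀ j, ContDiff ℝ (⊤:ℕ∞) (k j))
include hk

lemma hS2 (x : ℝ) :
    HasDerivAt (fun x => ∑ l, (k l x)^2) (2*∑ l, k l x * deriv (k l) x) x :=
  sum_sq_hasDerivAt k hk x

lemma I1 (x : ℝ) : deriv (y1F k) x = ∑ l, k l x * eta1F k l x := by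
  unfold y1F eta1F
  rw [((hS2 k hk x).fun_neg.div_const 2).deriv]
  rw [show ∑ l, k l x * -deriv (k l) x = -(∑ l, k l x * deriv (k l) x) from by
    rw [← Finset.sum_neg_distrib]; exact Finset.sum_congr rfl fun l _ => by ring]
  ring

lemma I2 (j : Fin m) (x : ℝ) : z2F k j x = deriv (eta1F k j) x + y1F k x * k j x := by
  have : deriv (eta1F k j) x = -(deriv (deriv (k j)) x) := by
    unfold eta1F; rw [(hD (Dtop (hk j)) x).fun_neg.deriv]
  rw [this]; unfold z2F y1F; ring

lemma I3 (j j' : Fin m) (x : ℝ) :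
    deriv (xi2F k j j') x = k j x * z2F k j' x - z2F k j x * k j' x := by
  unfold xi2F
  rw [(((hD (hk j) x).fun_mul (hD (Dtop (hk j')) x)).fun_neg.fun_add
      ((hD (Dtop (hk j)) x).fun_mul (hD (hk j') x))).deriv]
  unfold z2F; ring

lemma dz2 (j : Fin m) (x : ℝ) :
    deriv (z2F k j) x = -(deriv (deriv (deriv (k j))) x
      + ((1/2)*(2*∑ l, k l x * deriv (k l) x))*k j x
      + ((1/2)*(∑ l, (k l x)^2))*deriv (k j) x) := by
  have h : HasDerivAt (fun x => deriv (deriv (k j)) x + (1/2)*(∑ l, (k l x)^2)*k j x)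
      (deriv (deriv (deriv (k j))) x
        + (((1/2)*(2*∑ l, k l x * deriv (k l) x))*k j x
          + ((1/2)*(∑ l, (k l x)^2))*(deriv (k j) x))) x :=
    (hD (Dtop (Dtop (hk j))) x).add (((hS2 k hk x).const_mul (1/2)).mul (hD (hk j) x))
  rw [show z2F k j = fun x => -(deriv (deriv (k j)) x + (1/2)*(∑ l, (k l x)^2)*k j x) from rfl,
    h.fun_neg.deriv]
  ring

lemma I4 (j : Fin m) (x : ℝ) :
    eta3F k j x = ∑ l, xi2F k j l x * k l x - deriv (z2F k j) x := by
  rw [dz2 k hk j x]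
  unfold eta3F xi2F
  rw [show ∑ l, (-(k j x * deriv (k l) x) + deriv (k j) x * k l x) * k l x
      = -(k j x * ∑ l, k l x * deriv (k l) x) + deriv (k j) x * ∑ l, (k l x)^2 from by
    rw [Finset.mul_sum, Finset.mul_sum, ← Finset.sum_neg_distrib, ← Finset.sum_add_distrib]
    exact Finset.sum_congr rfl fun l _ => by ring]
  ring

lemma I5 (x : ℝ) : deriv (y3F k) x = ∑ l, k l x * eta3F k l x := by
  unfold y3F eta3F
  have h1 : HasDerivAt (fun x => ∑ l, k l x * deriv (deriv (k l)) x)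
      (∑ l, (deriv (k l) x * deriv (deriv (k l)) x + k l x * deriv (deriv (deriv (k l))) x)) x :=
    HasDerivAt.fun_sum fun l _ => (hD (hk l) x).fun_mul (hD (Dtop (Dtop (hk l))) x)
  have h2 : HasDerivAt (fun x => ∑ l, (deriv (k l) x)^2)
      (2*∑ l, deriv (k l) x * deriv (deriv (k l)) x) x :=
    sum_sq_hasDerivAt (fun l => deriv (k l)) (fun l => Dtop (hk l)) x
  have h3 : HasDerivAt (fun x => (∑ l, (k l x)^2)^2)
      ((2:ℕ)*(∑ l, (k l x)^2)^(2-1)*(2*∑ l, k l x * deriv (k l) x)) x :=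
    (hS2 k hk x).pow 2
  rw [((h1.fun_sub (h2.div_const 2)).fun_add (h3.const_mul (3/8))).deriv]
  rw [Finset.sum_add_distrib]
  rw [show ∑ l, k l x * (deriv (deriv (deriv (k l))) x + 3/2*(∑ l', (k l' x)^2)*deriv (k l) x)
      = ∑ l, k l x * deriv (deriv (deriv (k l))) x
        + (3/2*(∑ l', (k l' x)^2))*(∑ l, k l x * deriv (k l) x) from by
    rw [Finset.sum_congr rfl
      (g := fun l => k l x * deriv (deriv (deriv (k l))) x
        + (3/2*(∑ l', (k l' x)^2))*(k l x * deriv (k l) x))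
      (fun l _ => by ring), Finset.sum_add_distrib, ← Finset.mul_sum]]
  push_cast
  ring
end Expl

section Seq
variable {m : ℕ}

/-- pair type for the even-stage data `(z, ξ)` -/
abbrev PairT (m : ℕ) := (Fin m → ℝ → ℝ) × (Fin m → Fin m → ℝ → ℝ)

noncomputable def etaOf (k : Fin m → ℝ → ℝ) (P : PairT m) (j : Fin m) : ℝ → ℝ :=
  fun x => ∑ l, P.2 j l x * k l x - deriv (P.1 j) x

noncomputable def yOf (k : Fin m → ℝ → ℝ) (P : PairT m) : ℝ → ℝ :=
  fun x => ∫ t in (0:ℝ)..x, ∑ l, k l t * etaOf k P l t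

noncomputable def znextF (k : Fin m → ℝ → ℝ) (P : PairT m) (j : Fin m) : ℝ → ℝ :=
  fun x => deriv (etaOf k P j) x + yOf k P x * k j x

noncomputable def xinextF (k : Fin m → ℝ → ℝ) (P : PairT m) (j j' : Fin m) : ℝ → ℝ :=
  fun x => ∫ t in (0:ℝ)..x, (k j t * znextF k P j' t - znextF k P j t * k j' t)

noncomputable def stepP (k : Fin m → ℝ → ℝ) (P : PairT m) : PairT m :=
  (znextF k P, xinextF k P)

structure GoodP (k : Fin m → ℝ → ℝ) (P : PairT m) : Prop where
  hz : ∀ j, ContDiff ℝ (⊤:ℕ∞) (P.1 j)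
  hξ : ∀ j j', ContDiff ℝ (⊤:ℕ∞) (P.2 j j')
  anti : ∀ j j' x, P.2 j j' x = -P.2 j' j x
  dξ : ∀ j j' x, deriv (P.2 j j') x = k j x * P.1 j' x - P.1 j x * k j' x

variable (k : Fin m → ℝ → ℝ) (hk : ∀ j, ContDiff ℝ (⊤:ℕ∞) (k j))
include hk

lemma etaOf_contDiff (P : PairT m) (hP : GoodP k P) (j : Fin m) :
    ContDiff ℝ (⊤:ℕ∞) (etaOf k P j) := by
  exact ((ContDiff.sum fun l _ => (hP.hξ j l).mul (hk l)).sub (Dtop (hP.hz j)))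

lemma yOf_contDiff (P : PairT m) (hP : GoodP k P) :
    ContDiff ℝ (⊤:ℕ∞) (yOf k P) :=
  primitive_contDiff (ContDiff.sum fun l _ => (hk l).mul (etaOf_contDiff k hk P hP l))

lemma znextF_contDiff (P : PairT m) (hP : GoodP k P) (j : Fin m) :
    ContDiff ℝ (⊤:ℕ∞) (znextF k P j) :=
  (Dtop (etaOf_contDiff k hk P hP j)).add ((yOf_contDiff k hk P hP).mul (hk j))

lemma yOf_deriv (P : PairT m) (hP : GoodP k P) (x : ℝ) :
    deriv (yOf k P) x = ∑ l, k l x * etaOf k P l x :=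
  (primitive_hasDerivAt
    ((ContDiff.sum fun l _ => (hk l).mul (etaOf_contDiff k hk P hP l)).continuous) x).deriv

lemma xinextF_deriv (P : PairT m) (hP : GoodP k P) (j j' : Fin m) (x : ℝ) :
    deriv (xinextF k P j j') x = k j x * znextF k P j' x - znextF k P j x * k j' x :=
  (primitive_hasDerivAt
    (((hk j).mul (znextF_contDiff k hk P hP j')).sub
      ((znextF_contDiff k hk P hP j).mul (hk j')) |>.continuous) x).deriv

omit hk in
lemma xinextF_anti (P : PairT m) (j j' : Fin m) (x : ℝ) :
    xinextF k P j j' x = -xinextF k P j' j x := by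
  unfold xinextF
  rw [← intervalIntegral.integral_neg]
  congr 1; funext t; ring

lemma stepP_good (P : PairT m) (hP : GoodP k P) : GoodP k (stepP k P) := by
  refine ⟨fun j => znextF_contDiff k hk P hP j,
    fun j j' => primitive_contDiff (((hk j).mul (znextF_contDiff k hk P hP j')).sub
      ((znextF_contDiff k hk P hP j).mul (hk j'))),
    fun j j' x => xinextF_anti k P j j' x,
    fun j j' x => xinextF_deriv k hk P hP j j' x⟩

end Seq

section More
variable {m : ℕ} (k : Fin m → ℝ → ℝ)

noncomputable def xi4F (j j' : Fin m) : ℝ → ℝ :=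
  fun x => ∫ t in (0:ℝ)..x, (k j t * z4F k j' t - z4F k j t * k j' t)

lemma xi2F_anti (j j' : Fin m) (x : ℝ) : xi2F k j j' x = -xi2F k j' j x := by
  unfold xi2F; ring

lemma xi4F_anti (j j' : Fin m) (x : ℝ) : xi4F k j j' x = -xi4F k j' j x := by
  unfold xi4F
  rw [← intervalIntegral.integral_neg]
  congr 1; funext t; ring

variable (hk : ∀ j, ContDiff ℝ (⊤:ℕ∞) (k j))
include hk

lemma Ssm : ContDiff ℝ (⊤:ℕ∞) (fun x => ∑ l, (k l x)^2) :=
  ContDiff.sum fun l _ => (hk l).pow 2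

lemma eta3F_contDiff (j : Fin m) : ContDiff ℝ (⊤:ℕ∞) (eta3F k j) :=
  (Dtop (Dtop (Dtop (hk j)))).add ((contDiff_const.mul (Ssm k hk)).mul (Dtop (hk j)))

lemma y3F_contDiff : ContDiff ℝ (⊤:ℕ∞) (y3F k) :=
  ((ContDiff.sum fun l _ => (hk l).mul (Dtop (Dtop (hk l)))).sub
    ((ContDiff.sum fun l _ => (Dtop (hk l)).pow 2).div_const 2)).add
    (contDiff_const.mul ((Ssm k hk).pow 2))

lemma z4F_contDiff (j : Fin m) : ContDiff ℝ (⊤:ℕ∞) (z4F k j) :=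
  (Dtop (eta3F_contDiff k hk j)).add ((y3F_contDiff k hk).mul (hk j))

lemma xi4F_deriv (j j' : Fin m) (x : ℝ) :
    deriv (xi4F k j j') x = k j x * z4F k j' x - z4F k j x * k j' x :=
  (primitive_hasDerivAt
    (((hk j).mul (z4F_contDiff k hk j')).sub
      ((z4F_contDiff k hk j).mul (hk j')) |>.continuous) x).deriv

lemma seed_good : GoodP k (z4F k, xi4F k) :=
  ⟨fun j => z4F_contDiff k hk j,
   fun j j' => primitive_contDiff (((hk j).mul (z4F_contDiff k hk j')).sub
      ((z4F_contDiff k hk j).mul (hk j'))),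
   fun j j' x => xi4F_anti k j j' x,
   fun j j' x => xi4F_deriv k hk j j' x⟩

end More

noncomputable def Qt {m : ℕ} (k : Fin m → ℝ → ℝ) (P : PairT m) :
    ℕ → ℝ → Matrix (Fin (m+2)) (Fin (m+2)) ℝ
  | 0 => fun x => evenM (fun j => P.1 j x) (fun j j' => P.2 j j' x)
  | 1 => fun x => oddM (yOf k P x) (fun j => etaOf k P j x)
  | (n+2) => Qt k (stepP k P) n

lemma Qt_rec {m : ℕ} (k : Fin m → ℝ → ℝ) (hk : ∀ j, ContDiff ℝ (⊤:ℕ∞) (k j)) :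
    ∀ (n : ℕ) (P : PairT m), GoodP k P → ∀ x,
      mderiv (Qt k P n) x
        + (PsiM (fun j => k j x) * Qt k P n x - Qt k P n x * PsiM (fun j => k j x))
        + (aMat m * Qt k P (n+1) x - Qt k P (n+1) x * aMat m) = 0 := by
  intro n
  induction n using Nat.twoStepInduction with
  | zero =>
    intro P hP x
    exact even_step (fun j => k j x) P.1 P.2 (yOf k P x) (fun j => etaOf k P j x) x
      (fun j j' => hP.anti j j' x) (fun j j' => hP.dξ j j' x) (fun j => rfl)
  | one =>
    intro P hP x
    exact odd_step (fun j => k j x) (yOf k P) (etaOf k P)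
      (fun j => znextF k P j x) (fun j j' => xinextF k P j j' x) x
      (yOf_deriv k hk P hP x) (fun j => rfl)
  | more n ih _ =>
    intro P hP x
    exact ih (stepP k P) (stepP_good k hk P hP) x

noncomputable def Qdef {m : ℕ} (k : Fin m → ℝ → ℝ) :
    ℕ → ℝ → Matrix (Fin (m+2)) (Fin (m+2)) ℝ
  | 0 => fun x => evenM (fun j => k j x) 0
  | 1 => fun x => oddM (y1F k x) (fun j => eta1F k j x)
  | 2 => fun x => evenM (fun j => z2F k j x) (fun j j' => xi2F k j j' x)
  | 3 => fun x => oddM (y3F k x) (fun j => eta3F k j x)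
  | (n+4) => Qt k (z4F k, xi4F k) n
/-- with `a = e₂₁ - e₁₂` and `u = Ψ(k)`, there is a formal series
`Q(u,λ) = aλ + Σ_{i≥0} Qᵢ(u)λ^{-i}` with `[∂_x + aλ + u, Q(u,λ)] = 0` (i.e. the
coefficient recursion `(Qᵢ)_x + [u,Qᵢ] + [a,Q_{i+1}] = 0` holds, together with the
top-order condition `[a,Q₀] + [u,a] = 0`), whose first coefficients are
`z₀ = k, ξ₀ = 0`, `y₁ = -‖k‖²/2, η₁ = -k_x`, `z₂ = -(k_{xx} + ½‖k‖²k)`,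
`ξ₂ = -k k_xᵗ + k_x kᵗ`, `y₃ = kᵗk_{xx} - ‖k_x‖²/2 + (3/8)‖k‖⁴`,
`η₃ = k_{xxx} + (3/2)‖k‖²k_x`. -/
theorem stmt11 {m : ℕ}
    (k : Fin m → ℝ → ℝ)
    (hk : ∀ j, ContDiff ℝ (⊤ : ℕ∞) (k j)) :
    ∃ Q : ℕ → ℝ → Matrix (Fin (m + 2)) (Fin (m + 2)) ℝ,
      -- the top-order (λ¹) condition `[a,Q₀] + [u,a] = 0`
      (∀ x, aMat m * Q 0 x - Q 0 x * aMat m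
          + (PsiM (fun j => k j x) * aMat m - aMat m * PsiM (fun j => k j x)) = 0) ∧
      -- the recursion `(Qᵢ)_x + [u,Qᵢ] + [a,Q_{i+1}] = 0` for all `i ≥ 0`
      (∀ i x, mderiv (Q i) x
          + (PsiM (fun j => k j x) * Q i x - Q i x * PsiM (fun j => k j x))
          + (aMat m * Q (i + 1) x - Q (i + 1) x * aMat m) = 0) ∧
      -- `Q₀`: `z₀ = k`, `ξ₀ = 0`
      (∀ x, Q 0 x = evenM (fun j => k j x) 0) ∧
      -- `Q₁`: `y₁ = -‖k‖²/2`, `η₁ = -k_x`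
      (∀ x, Q 1 x = oddM (-(∑ l, (k l x) ^ 2) / 2) (fun j => -deriv (k j) x)) ∧
      -- `Q₂`: `z₂ = -(k_{xx} + ½‖k‖²k)`, `ξ₂ = -k k_xᵗ + k_x kᵗ`
      (∀ x, Q 2 x = evenM
          (fun j => -(deriv (deriv (k j)) x + (1 / 2) * (∑ l, (k l x) ^ 2) * k j x))
          (fun j j' => -(k j x * deriv (k j') x) + deriv (k j) x * k j' x)) ∧
      -- `Q₃`: `y₃ = kᵗk_{xx} - ‖k_x‖²/2 + (3/8)‖k‖⁴`, `η₃ = k_{xxx} + (3/2)‖k‖²k_x`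
      (∀ x, Q 3 x = oddM
          (∑ l, k l x * deriv (deriv (k l)) x - (∑ l, (deriv (k l) x) ^ 2) / 2
            + (3 / 8) * (∑ l, (k l x) ^ 2) ^ 2)
          (fun j => deriv (deriv (deriv (k j))) x
            + (3 / 2) * (∑ l, (k l x) ^ 2) * deriv (k j) x)) := by
  have hk' : ∀ j, ContDiff ℝ (⊤:ℕ∞) (k j) := fun j => (hk j).of_le (by simp)
  refine ⟨Qdef k, ?_, ?_, fun x => rfl, fun x => rfl, fun x => rfl, fun x => rfl⟩
  · intro x
    exact top_step (fun j => k j x)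
  · intro i x
    match i with
    | 0 =>
      exact even_step (fun j => k j x) (fun j => k j) (fun _ _ _ => 0)
        (y1F k x) (fun j => eta1F k j x) x
        (fun j j' => by simp) (fun j j' => by simp)
        (fun j => by simp [eta1F])
    | 1 =>
      exact odd_step (fun j => k j x) (y1F k) (eta1F k)
        (fun j => z2F k j x) (fun j j' => xi2F k j j' x) x
        (I1 k hk' x) (fun j => I2 k hk' j x)
    | 2 =>
      exact even_step (fun j => k j x) (z2F k) (xi2F k)
        (y3F k x) (fun j => eta3F k j x) x
        (fun j j' => xi2F_anti k j j' x) (fun j j' => I3 k hk' j j' x)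
        (fun j => I4 k hk' j x)
    | 3 =>
      exact odd_step (fun j => k j x) (y3F k) (eta3F k)
        (fun j => z4F k j x) (fun j j' => xi4F k j j' x) x
        (I5 k hk' x) (fun j => rfl)
    | (n+4) =>
      exact Qt_rec k hk' n (z4F k, xi4F k) (seed_good k hk') x
end
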